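/- arXiv:1606.08615 — 3 statements merged into one kernel-verified Lean document; each statement's English description precedes it below -/
import Mathlib

section
/- Let T be any continuous linear operator on ℓ²(ℕ, ℂ) satisfying the Jacobi identities for ω, and let t > 2 be a real number such that Σₙ ω n · (P n (t))² < ∞. Then t (regarded as a complex number) belongs to the spectrum of T. -/
open scoped BigOperators

/-- `T` acts as the Jacobi matrix `J_ω` on ℓ²(ℕ, ℂ). -/
def JacobiFor (ω : ℕ → ℝ) (T : lp (fun _ : ℕ => ℂ) 2 →L[ℂ] lp (fun _ : ℕ => ℂ) 2) : Prop :=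
  ∀ v : lp (fun _ : ℕ => ℂ) 2,
    (T v : ∀ _ : ℕ, ℂ) 0 = (Real.sqrt (ω 1 / ω 2) : ℂ) * (v : ∀ _ : ℕ, ℂ) 1 ∧
    ∀ n : ℕ, 1 ≤ n →
      (T v : ∀ _ : ℕ, ℂ) n =
        (Real.sqrt (ω n / ω (n + 1)) : ℂ) * (v : ∀ _ : ℕ, ℂ) (n - 1) +
          (Real.sqrt (ω (n + 1) / ω (n + 2)) : ℂ) * (v : ∀ _ : ℕ, ℂ) (n + 1)

/-- The monic orthogonal polynomials associated with ω:
P 0 = 1, P 1 = x, P (n+2) (x) = x · P (n+1) (x) − (ω (n+1) / ω (n+2)) · P n (x). -/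
noncomputable def OP (ω : ℕ → ℝ) : ℕ → ℝ → ℝ
  | 0, _ => 1
  | 1, x => x
  | (n + 2), x => x * OP ω (n + 1) x - ω (n + 1) / ω (n + 2) * OP ω n x

theorem stmt10 (ω : ℕ → ℝ) (hpos : ∀ n, 0 < ω n) (h0 : ω 0 = 1)
    (hlim : Filter.Tendsto (fun n => ω n / ω (n + 1)) Filter.atTop (nhds 1))
    (T : lp (fun _ : ℕ => ℂ) 2 →L[ℂ] lp (fun _ : ℕ => ℂ) 2)
    (hT : JacobiFor ω T) (t : ℝ) (ht : 2 < t)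
    (hsum : Summable (fun n => ω n * OP ω n t ^ 2)) :
    (t : ℂ) ∈ spectrum ℂ T := by
  -- the candidate eigenvector
  set g : ℕ → ℝ := fun n => Real.sqrt (ω (n + 1)) * OP ω n t with hg
  -- summability of ω (n+1) * P n ^ 2
  have hsum' : Summable (fun n => ω (n + 1) * OP ω n t ^ 2) := by
    obtain ⟨N, hN⟩ : ∃ N, ∀ n ≥ N, (1 : ℝ) / 2 < ω n / ω (n + 1) := by
      have := hlim.eventually (eventually_gt_nhds (by norm_num : (1:ℝ)/2 < 1))
      exact Filter.eventually_atTop.1 this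
    rw [← summable_nat_add_iff N]
    have hle : ∀ n : ℕ, ω (n + N + 1) * OP ω (n + N) t ^ 2
        ≤ 2 * (ω (n + N) * OP ω (n + N) t ^ 2) := by
      intro n
      have h1 := hN (n + N) (by omega)
      have h2 : ω (n + N + 1) ≤ 2 * ω (n + N) := by
        have hb := hpos (n + N + 1)
        rw [div_lt_div_iff₀ (by positivity) hb] at h1
        nlinarith
      nlinarith [sq_nonneg (OP ω (n + N) t), hpos (n + N), hpos (n + N + 1)]
    refine Summable.of_nonneg_of_le
      (fun n => mul_nonneg (hpos _).le (sq_nonneg _)) hle ?_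
    exact (summable_nat_add_iff N).2 (hsum.mul_left 2)
  have hmem : Memℓp (fun n => ((g n : ℝ) : ℂ)) 2 := by
    apply memℓp_gen
    have heq : (fun n : ℕ => ‖((g n : ℝ) : ℂ)‖ ^ (2 : ENNReal).toReal)
        = fun n => ω (n + 1) * OP ω n t ^ 2 := by
      funext n
      rw [show ((2 : ENNReal)).toReal = (2 : ℝ) by simp,
        show ‖((g n : ℝ) : ℂ)‖ ^ (2 : ℝ) = ‖((g n : ℝ) : ℂ)‖ ^ (2 : ℕ) by
          rw [← Real.rpow_natCast]; norm_num,
        Complex.norm_real, Real.norm_eq_abs, sq_abs]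
      simp only [hg]
      rw [mul_pow, Real.sq_sqrt (hpos (n + 1)).le]
    rw [heq]
    exact hsum'
  set v : lp (fun _ : ℕ => ℂ) 2 := ⟨fun n => ((g n : ℝ) : ℂ), hmem⟩ with hv
  have hvcoe : ∀ n, (v : ∀ _ : ℕ, ℂ) n = ((g n : ℝ) : ℂ) := fun n => rfl
  -- the real-coefficient eigen identities
  have key : ∀ m : ℕ, Real.sqrt (ω (m + 1) / ω (m + 2)) * g m
      + Real.sqrt (ω (m + 2) / ω (m + 3)) * g (m + 2) = t * g (m + 1) := by
    intro m
    have p1 := hpos (m + 1); have p2 := hpos (m + 2); have p3 := hpos (m + 3)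
    have h1 := Real.sq_sqrt p1.le
    have h2 := Real.sq_sqrt p2.le
    simp only [hg]
    rw [show m + 2 + 1 = m + 3 by omega, show m + 1 + 1 = m + 2 by omega,
      Real.sqrt_div p1.le, Real.sqrt_div p2.le,
      show OP ω (m + 2) t = t * OP ω (m + 1) t - ω (m + 1) / ω (m + 2) * OP ω m t from rfl]
    set A := Real.sqrt (ω (m + 1)) with hA
    set B := Real.sqrt (ω (m + 2)) with hB
    set C := Real.sqrt (ω (m + 3)) with hC
    have hBne : B ≠ 0 := ne_of_gt (Real.sqrt_pos.2 p2)
    have hCne : C ≠ 0 := ne_of_gt (Real.sqrt_pos.2 p3)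
    rw [← h1, ← h2]
    field_simp
    ring
  have key0 : Real.sqrt (ω 1 / ω 2) * g 1 = t * g 0 := by
    have p1 := hpos 1; have p2 := hpos 2
    have h1 := Real.sq_sqrt p1.le
    have h2 := Real.sq_sqrt p2.le
    simp only [hg]
    rw [show OP ω 1 t = t from rfl, show OP ω 0 t = 1 from rfl,
      Real.sqrt_div p1.le]
    set A := Real.sqrt (ω 1) with hA
    set B := Real.sqrt (ω 2) with hB
    have hBne : B ≠ 0 := ne_of_gt (Real.sqrt_pos.2 p2)
    field_simp
  -- eigen equation
  have heig : T v = (t : ℂ) • v := by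
    apply lp.ext
    rw [lp.coeFn_smul]
    funext n
    simp only [Pi.smul_apply, smul_eq_mul]
    obtain ⟨h0', hn'⟩ := hT v
    match n with
    | 0 =>
      rw [h0']
      show ((Real.sqrt (ω 1 / ω 2) : ℝ) : ℂ) * ((g 1 : ℝ) : ℂ)
        = ((t : ℝ) : ℂ) * ((g 0 : ℝ) : ℂ)
      exact_mod_cast congrArg Complex.ofReal key0
    | (m + 1) =>
      rw [hn' (m + 1) (Nat.le_add_left 1 m)]
      have hk := key m
      show ((Real.sqrt (ω (m + 1) / ω (m + 2)) : ℝ) : ℂ) * ((g m : ℝ) : ℂ)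
          + ((Real.sqrt (ω (m + 2) / ω (m + 3)) : ℝ) : ℂ) * ((g (m + 2) : ℝ) : ℂ)
        = ((t : ℝ) : ℂ) * ((g (m + 1) : ℝ) : ℂ)
      exact_mod_cast congrArg Complex.ofReal hk
  have hvne : v ≠ 0 := by
    intro h
    have h1 : (v : ∀ _ : ℕ, ℂ) 0 = 0 := by rw [h]; rfl
    rw [hvcoe] at h1
    have h2 : g 0 = 0 := Complex.ofReal_eq_zero.mp h1
    have h3 : Real.sqrt (ω 1) * OP ω 0 t = 0 := h2
    rw [show OP ω 0 t = 1 from rfl, mul_one] at h3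
    exact absurd h3 (ne_of_gt (Real.sqrt_pos.2 (hpos 1)))
  rw [spectrum.mem_iff]
  intro hunit
  obtain ⟨u, hu⟩ := hunit
  apply hvne
  have h1 : (algebraMap ℂ (lp (fun _ : ℕ => ℂ) 2 →L[ℂ] lp (fun _ : ℕ => ℂ) 2) (t : ℂ) - T) v
      = 0 := by
    simp [ContinuousLinearMap.sub_apply, Algebra.algebraMap_eq_smul_one, heig]
    exact sub_eq_zero.mpr rfl
  have h2 : ((↑u⁻¹ : lp (fun _ : ℕ => ℂ) 2 →L[ℂ] lp (fun _ : ℕ => ℂ) 2) *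
      (↑u : lp (fun _ : ℕ => ℂ) 2 →L[ℂ] lp (fun _ : ℕ => ℂ) 2)) v
      = (↑u⁻¹ : lp (fun _ : ℕ => ℂ) 2 →L[ℂ] lp (fun _ : ℕ => ℂ) 2) 0 := by
    rw [ContinuousLinearMap.mul_apply, hu, h1]
  rw [Units.inv_mul] at h2
  simpa using h2
end

section
/- Let α < 0 and ω n = (n+1)^α (the Dirichlet-type space D_α). Then for every sequence a : ℕ → ℂ with 0 < Σₙ |a n|² ω n < ∞ and a 0 ≠ 0, every n ∈ ℕ, every optimal approximant (p₀, …, pₙ) of order n to 1/f, and every z₀ ∈ ℂ with Σ_{k=0}^{n} p_k · z₀^k = 0, one has |z₀| ≥ (3/2)^{α/2}. -/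
open scoped BigOperators

/-- The squared error ‖pf − 1‖²_ω, where `p` is a polynomial of degree at most `n`
with coefficients `p 0, …, p n` and `f` has Maclaurin coefficients `a`. -/
noncomputable def approxErr (ω : ℕ → ℝ) (a : ℕ → ℂ) (n : ℕ) (p : ℕ → ℂ) : ℝ :=
  ∑' m : ℕ, ‖(∑ k ∈ Finset.range (min m n + 1), p k * a (m - k)) -
      (if m = 0 then 1 else 0)‖ ^ 2 * ω m

/-- `p 0, …, p n` are the coefficients of an optimal approximant of order `n` to `1/f`. -/
def IsOptApprox (ω : ℕ → ℝ) (a : ℕ → ℂ) (n : ℕ) (p : ℕ → ℂ) : Prop :=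
  ∀ q : ℕ → ℂ, approxErr ω a n p ≤ approxErr ω a n q

namespace Stmt14Aux

noncomputable def wt (α : ℝ) : ℕ → ℝ := fun m => ((m : ℝ) + 1) ^ α

lemma wt_pos (α : ℝ) (m : ℕ) : 0 < wt α m :=
  Real.rpow_pos_of_pos (by positivity) _

lemma wt_nonneg (α : ℝ) (m : ℕ) : 0 ≤ wt α m := (wt_pos α m).le

lemma wt_zero (α : ℝ) : wt α 0 = 1 := by simp [wt]

lemma wt_anti {α : ℝ} (hα : α < 0) {j m : ℕ} (h : j ≤ m) : wt α m ≤ wt α j := by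
  have hj : ((j : ℝ) + 1) ≤ ((m : ℝ) + 1) := by
    have : (j : ℝ) ≤ m := Nat.cast_le.mpr h
    linarith
  exact Real.rpow_le_rpow_of_nonpos (by positivity) hj hα.le

lemma wt_ratio {α : ℝ} (hα : α < 0) (k : ℕ) :
    (3 / 2 : ℝ) ^ α * wt α (k + 1) ≤ wt α (k + 2) := by
  have h32 : (0:ℝ) ≤ 3/2 := by norm_num
  have hk1 : (0:ℝ) ≤ ((k+1 : ℕ) : ℝ) + 1 := by positivity
  rw [wt, wt, ← Real.mul_rpow h32 hk1]
  apply Real.rpow_le_rpow_of_nonpos (by positivity) ?_ hα.le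
  push_cast
  linarith [Nat.cast_nonneg (α := ℝ) k]

noncomputable def conv (a : ℕ → ℂ) (n : ℕ) (w : ℕ → ℂ) (m : ℕ) : ℂ :=
  ∑ k ∈ Finset.range (min m n + 1), w k * a (m - k)

lemma shift_summable {α : ℝ} (hα : α < 0) {a : ℕ → ℂ}
    (hsum : Summable (fun m => ‖a m‖ ^ 2 * wt α m)) (j : ℕ) :
    Summable (fun m => ‖a (m - j)‖ ^ 2 * wt α m) := by
  rw [← summable_nat_add_iff j]
  apply Summable.of_nonneg_of_le
    (fun m => mul_nonneg (sq_nonneg _) (wt_nonneg α _)) ?_ hsum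
  intro m
  rw [Nat.add_sub_cancel]
  exact mul_le_mul_of_nonneg_left (wt_anti hα (Nat.le_add_right m j)) (sq_nonneg _)

lemma conv_summable {α : ℝ} (hα : α < 0) {a : ℕ → ℂ}
    (hsum : Summable (fun m => ‖a m‖ ^ 2 * wt α m)) (n : ℕ) (w : ℕ → ℂ) :
    Summable (fun m => ‖conv a n w m‖ ^ 2 * wt α m) := by
  have hmaj : Summable (fun m => ∑ k ∈ Finset.range (n+1),
      (((n:ℝ)+1) * ‖w k‖ ^ 2) * (‖a (m - k)‖ ^ 2 * wt α m)) := by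
    apply summable_sum
    intro k _
    exact (shift_summable hα hsum k).mul_left _
  apply Summable.of_nonneg_of_le
    (fun m => mul_nonneg (sq_nonneg _) (wt_nonneg α _)) ?_ hmaj
  intro m
  have h1 : ‖conv a n w m‖ ≤ ∑ k ∈ Finset.range (min m n + 1), ‖w k‖ * ‖a (m - k)‖ := by
    refine (norm_sum_le _ _).trans_eq ?_
    exact Finset.sum_congr rfl (fun k _ => norm_mul _ _)
  have h2 : ‖conv a n w m‖ ^ 2 ≤
      ((min m n + 1 : ℕ) : ℝ) * ∑ k ∈ Finset.range (min m n + 1), (‖w k‖ * ‖a (m - k)‖) ^ 2 := by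
    calc ‖conv a n w m‖ ^ 2 ≤ (∑ k ∈ Finset.range (min m n + 1), ‖w k‖ * ‖a (m - k)‖) ^ 2 := by
          apply pow_le_pow_left₀ (norm_nonneg _) h1
      _ ≤ _ := by
          have := sq_sum_le_card_mul_sum_sq (s := Finset.range (min m n + 1))
            (f := fun k => ‖w k‖ * ‖a (m - k)‖)
          simpa using this
  have h3 : ((min m n + 1 : ℕ) : ℝ) * ∑ k ∈ Finset.range (min m n + 1), (‖w k‖ * ‖a (m - k)‖) ^ 2
      ≤ ((n:ℝ)+1) * ∑ k ∈ Finset.range (n + 1), (‖w k‖ * ‖a (m - k)‖) ^ 2 := by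
    apply mul_le_mul
    · have h5 : ((min m n + 1 : ℕ):ℝ) ≤ ((n + 1 : ℕ):ℝ) := Nat.cast_le.mpr (by omega)
      push_cast at h5 ⊢; linarith
    · apply Finset.sum_le_sum_of_subset_of_nonneg
      · exact Finset.range_subset_range.mpr (by omega)
      · intro k _ _; positivity
    · apply Finset.sum_nonneg; intro k _; positivity
    · positivity
  have h4 : ‖conv a n w m‖ ^ 2 * wt α m ≤
      (((n:ℝ)+1) * ∑ k ∈ Finset.range (n + 1), (‖w k‖ * ‖a (m - k)‖) ^ 2) * wt α m :=
    mul_le_mul_of_nonneg_right (h2.trans h3) (wt_nonneg α m)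
  refine h4.trans_eq ?_
  rw [Finset.mul_sum, Finset.sum_mul]
  exact Finset.sum_congr rfl (fun k _ => by ring)

lemma prod_norm_summable {W : ℕ → ℝ} (hW : ∀ m, 0 ≤ W m) {f g : ℕ → ℂ}
    (hf : Summable (fun m => ‖f m‖ ^ 2 * W m)) (hg : Summable (fun m => ‖g m‖ ^ 2 * W m)) :
    Summable (fun m => ‖f m‖ * ‖g m‖ * W m) := by
  apply Summable.of_nonneg_of_le
    (fun m => mul_nonneg (mul_nonneg (norm_nonneg _) (norm_nonneg _)) (hW m)) ?_
    ((hf.add hg).mul_left (1/2 : ℝ))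
  intro m
  nlinarith [mul_nonneg (sq_nonneg (‖f m‖ - ‖g m‖)) (hW m)]

lemma prod_norm_eq {W : ℕ → ℝ} (hW : ∀ m, 0 ≤ W m) (f g : ℕ → ℂ) (m : ℕ) :
    ‖f m * (starRingEnd ℂ) (g m) * ((W m : ℝ) : ℂ)‖ = ‖f m‖ * ‖g m‖ * W m := by
  rw [norm_mul, norm_mul, RCLike.norm_conj, Complex.norm_real, Real.norm_of_nonneg (hW m)]

lemma prod_summable {W : ℕ → ℝ} (hW : ∀ m, 0 ≤ W m) {f g : ℕ → ℂ}
    (hf : Summable (fun m => ‖f m‖ ^ 2 * W m)) (hg : Summable (fun m => ‖g m‖ ^ 2 * W m)) :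
    Summable (fun m => f m * (starRingEnd ℂ) (g m) * ((W m : ℝ) : ℂ)) := by
  apply Summable.of_norm
  exact (prod_norm_summable hW hf hg).congr (fun m => (prod_norm_eq hW f g m).symm)

lemma orth_abstract {W : ℕ → ℝ} (hW : ∀ m, 0 ≤ W m) {F cw : ℕ → ℂ}
    (hFs : Summable (fun m => ‖F m‖ ^ 2 * W m))
    (hws : Summable (fun m => ‖cw m‖ ^ 2 * W m))
    (hopt : ∀ c : ℂ, ∑' m, ‖F m‖ ^ 2 * W m ≤ ∑' m, ‖F m + c * cw m‖ ^ 2 * W m) :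
    ∑' m : ℕ, cw m * (starRingEnd ℂ) (F m) * ((W m : ℝ) : ℂ) = 0 := by
  have hu : Summable (fun m => cw m * (starRingEnd ℂ) (F m) * ((W m : ℝ) : ℂ)) :=
    prod_summable hW hws hFs
  set T : ℂ := ∑' m, cw m * (starRingEnd ℂ) (F m) * ((W m : ℝ) : ℂ) with hT
  set N : ℝ := ∑' m, ‖cw m‖ ^ 2 * W m with hN
  have hterm : ∀ (c : ℂ) m, ‖F m + c * cw m‖ ^ 2 * W m
      = ‖F m‖ ^ 2 * W m + ‖c‖ ^ 2 * (‖cw m‖ ^ 2 * W m)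
        + 2 * (c * (cw m * (starRingEnd ℂ) (F m) * ((W m : ℝ) : ℂ))).re := by
    intro c m
    have e1 : ‖F m + c * cw m‖ ^ 2
        = ‖F m‖ ^ 2 + ‖c * cw m‖ ^ 2 + 2 * ((F m) * (starRingEnd ℂ) (c * cw m)).re := by
      rw [Complex.sq_norm, Complex.sq_norm, Complex.sq_norm]
      exact Complex.normSq_add _ _
    have e3 : c * (cw m * (starRingEnd ℂ) (F m) * ((W m : ℝ) : ℂ))
        = (starRingEnd ℂ) ((F m) * (starRingEnd ℂ) (c * cw m)) * ((W m : ℝ) : ℂ) := by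
      simp only [map_mul, Complex.conj_conj]
      ring
    have e2 : ((F m) * (starRingEnd ℂ) (c * cw m)).re * W m
        = (c * (cw m * (starRingEnd ℂ) (F m) * ((W m : ℝ) : ℂ))).re := by
      rw [e3]
      simp only [Complex.mul_re, Complex.mul_im, Complex.ofReal_re, Complex.ofReal_im,
        Complex.conj_re, Complex.conj_im, mul_zero, zero_mul, sub_zero, neg_mul, neg_neg]
    rw [e1, norm_mul, mul_pow, ← e2]
    ring
  have hkey : ∀ c : ℂ, 0 ≤ ‖c‖ ^ 2 * N + 2 * (c * T).re := by
    intro c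
    have hs2 : Summable (fun m => ‖c‖ ^ 2 * (‖cw m‖ ^ 2 * W m)) := hws.mul_left _
    have hsc : Summable (fun m => c * (cw m * (starRingEnd ℂ) (F m) * ((W m : ℝ) : ℂ))) :=
      hu.mul_left c
    have hs3 : Summable (fun m =>
        2 * (c * (cw m * (starRingEnd ℂ) (F m) * ((W m : ℝ) : ℂ))).re) :=
      (hsc.map Complex.reCLM Complex.reCLM.continuous).mul_left 2
    have h1 := hopt c
    rw [tsum_congr (hterm c), Summable.tsum_add (hFs.add hs2) hs3, Summable.tsum_add hFs hs2,
      tsum_mul_left, tsum_mul_left] at h1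
    have h2 : ∑' m, (c * (cw m * (starRingEnd ℂ) (F m) * ((W m : ℝ) : ℂ))).re
        = (c * T).re := by
      rw [← Complex.re_tsum hsc, tsum_mul_left]
    rw [h2] at h1
    linarith
  by_contra hTne
  have hTpos : 0 < ‖T‖ ^ 2 := pow_pos (norm_pos_iff.mpr hTne) 2
  have hNnn : 0 ≤ N := tsum_nonneg (fun m => mul_nonneg (sq_nonneg _) (hW m))
  set ε : ℝ := 1 / (N + 1) with hε
  have hεpos : 0 < ε := by rw [hε]; exact one_div_pos.mpr (by linarith)
  have hεN : ε * N < 1 := by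
    rw [hε, div_mul_eq_mul_div, div_lt_one (by linarith)]
    linarith
  have hc := hkey (-(ε : ℂ) * (starRingEnd ℂ) T)
  have hcnorm : ‖-(ε : ℂ) * (starRingEnd ℂ) T‖ ^ 2 = ε ^ 2 * ‖T‖ ^ 2 := by
    rw [norm_mul, norm_neg, RCLike.norm_conj, Complex.norm_real,
      Real.norm_of_nonneg hεpos.le, mul_pow]
  have hcre : ((-(ε : ℂ) * (starRingEnd ℂ) T) * T).re = -(ε * ‖T‖ ^ 2) := by
    have h5 : (-(ε : ℂ) * (starRingEnd ℂ) T) * T = -((ε : ℂ) * ((‖T‖ ^ 2 : ℝ) : ℂ)) := by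
      rw [mul_assoc, mul_comm ((starRingEnd ℂ) T) T, Complex.mul_conj,
        Complex.normSq_eq_norm_sq]
      ring
    rw [h5, ← Complex.ofReal_mul, ← Complex.ofReal_neg, Complex.ofReal_re]
  rw [hcnorm, hcre] at hc
  nlinarith [mul_pos hεpos hTpos, mul_lt_mul_of_pos_left hεN (mul_pos hεpos hTpos)]

end Stmt14Aux


open Stmt14Aux in
theorem stmt14 (α : ℝ) (hα : α < 0)
    (a : ℕ → ℂ)
    (hsum : Summable (fun n => ‖a n‖ ^ 2 * ((n : ℝ) + 1) ^ α))
    (hne : 0 < ∑' n : ℕ, ‖a n‖ ^ 2 * ((n : ℝ) + 1) ^ α) (ha0 : a 0 ≠ 0)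
    (n : ℕ) (p : ℕ → ℂ)
    (hp : IsOptApprox (fun k => ((k : ℝ) + 1) ^ α) a n p)
    (z₀ : ℂ) (hz : ∑ k ∈ Finset.range (n + 1), p k * z₀ ^ k = 0) :
    ((3 : ℝ) / 2) ^ (α / 2) ≤ ‖z₀‖ := by
  classical
  have hsum' : Summable (fun m => ‖a m‖ ^ 2 * wt α m) := hsum
  have hp' : IsOptApprox (wt α) a n p := hp
  obtain ⟨q, hqk⟩ : ∃ q : ℕ → ℂ, ∀ k, q k = ∑ i ∈ Finset.Ioc k n, p i * z₀ ^ (i - k - 1) :=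
    ⟨_, fun _ => rfl⟩
  obtain ⟨G, hGk⟩ : ∃ G : ℕ → ℂ, ∀ m, G m = ∑ k ∈ Finset.range (m + 1), q k * a (m - k) :=
    ⟨_, fun _ => rfl⟩
  obtain ⟨wZ, hwZk⟩ : ∃ wZ : ℕ → ℂ, ∀ k, wZ k = if k = 0 then 0 else q (k - 1) :=
    ⟨_, fun _ => rfl⟩
  obtain ⟨ZG, hZGk⟩ : ∃ ZG : ℕ → ℂ, ∀ m, ZG m = if m = 0 then 0 else G (m - 1) :=
    ⟨_, fun _ => rfl⟩
  have qzero : ∀ k, n ≤ k → q k = 0 := by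
    intro k hk
    rw [hqk k, Finset.Ioc_eq_empty (by omega), Finset.sum_empty]
  -- coefficient identity
  have coeffAll : ∀ k, k ≤ n → p k = wZ k - z₀ * q k := by
    intro k hkn
    rcases Nat.eq_zero_or_pos k with hk0 | hk1
    · subst hk0
      have h2 : z₀ * q 0 = ∑ i ∈ Finset.Ioc 0 n, p i * z₀ ^ i := by
        rw [hqk 0, Finset.mul_sum]
        refine Finset.sum_congr rfl (fun i hi => ?_)
        simp only [Finset.mem_Ioc] at hi
        have hpw : z₀ ^ (i - 0 - 1) * z₀ = z₀ ^ i := by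
          rw [← pow_succ]; congr 1; omega
        calc z₀ * (p i * z₀ ^ (i - 0 - 1)) = p i * (z₀ ^ (i - 0 - 1) * z₀) := by ring
          _ = p i * z₀ ^ i := by rw [hpw]
      have h3 : Finset.range (n+1) = Finset.cons 0 (Finset.Ioc 0 n) (by simp) := by
        rw [Finset.range_eq_Ico, Finset.Ico_add_one_right_eq_Icc, Finset.Icc_eq_cons_Ioc (Nat.zero_le n)]
      rw [h3, Finset.sum_cons, pow_zero, mul_one] at hz
      rw [hwZk 0, if_pos rfl, h2]
      linear_combination hz
    · have h1 : q (k-1) = ∑ i ∈ Finset.Icc k n, p i * z₀ ^ (i - k) := by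
        rw [hqk (k-1)]
        have he : Finset.Ioc (k-1) n = Finset.Icc k n := by
          rw [← Finset.Icc_add_one_left_eq_Ioc]
          congr 1
          omega
        rw [he]
        refine Finset.sum_congr rfl (fun i hi => ?_)
        rw [show i - (k-1) - 1 = i - k by omega]
      have h2 : z₀ * q k = ∑ i ∈ Finset.Ioc k n, p i * z₀ ^ (i - k) := by
        rw [hqk k, Finset.mul_sum]
        refine Finset.sum_congr rfl (fun i hi => ?_)
        simp only [Finset.mem_Ioc] at hi
        have hpw : z₀ ^ (i - k - 1) * z₀ = z₀ ^ (i - k) := by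
          rw [← pow_succ]; congr 1; omega
        calc z₀ * (p i * z₀ ^ (i - k - 1)) = p i * (z₀ ^ (i - k - 1) * z₀) := by ring
          _ = p i * z₀ ^ (i - k) := by rw [hpw]
      have h3 : Finset.Icc k n = Finset.cons k (Finset.Ioc k n) (by simp) :=
        Finset.Icc_eq_cons_Ioc hkn
      rw [hwZk k, if_neg (by omega), h1, h3, Finset.sum_cons, h2, Nat.sub_self, pow_zero]
      ring
  -- convolution identities
  have I3 : ∀ m, (∑ k ∈ Finset.range (min m n + 1), q k * a (m - k)) = G m := by
    intro m
    rw [hGk m]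
    rcases le_or_gt m n with h | h
    · rw [min_eq_left h]
    · rw [min_eq_right h.le]
      refine Finset.sum_subset (Finset.range_subset_range.mpr (by omega)) (fun x hx hnx => ?_)
      simp only [Finset.mem_range] at hnx
      rw [qzero x (by omega), zero_mul]
  have I1 : ∀ m, (∑ k ∈ Finset.range (min m n + 1), wZ k * a (m - k)) = ZG m := by
    intro m
    rcases m with _ | m'
    · rw [hZGk 0, if_pos rfl]
      simp [hwZk 0]
    · rw [Finset.sum_range_succ']
      rw [hwZk 0, if_pos rfl, zero_mul, add_zero]
      have hc : ∀ i ∈ Finset.range (min (m'+1) n), wZ (i+1) * a (m'+1 - (i+1)) = q i * a (m' - i) := by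
        intro i _
        rw [hwZk (i+1), if_neg (by omega), Nat.add_sub_cancel, Nat.succ_sub_succ]
      rw [Finset.sum_congr rfl hc, hZGk (m'+1), if_neg (by omega), Nat.add_sub_cancel, hGk m']
      rcases le_or_gt (m'+1) n with h | h
      · rw [min_eq_left h]
      · rw [min_eq_right (by omega)]
        refine Finset.sum_subset (Finset.range_subset_range.mpr (by omega)) (fun x hx hnx => ?_)
        simp only [Finset.mem_range] at hnx
        rw [qzero x (by omega), zero_mul]
  have I2 : ∀ m, (∑ k ∈ Finset.range (min m n + 1), p k * a (m - k)) = ZG m - z₀ * G m := by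
    intro m
    have hterm : ∀ k ∈ Finset.range (min m n + 1), p k * a (m - k)
        = wZ k * a (m - k) - z₀ * (q k * a (m - k)) := by
      intro k hk
      simp only [Finset.mem_range] at hk
      rw [coeffAll k (by omega)]
      ring
    rw [Finset.sum_congr rfl hterm, Finset.sum_sub_distrib, ← Finset.mul_sum, I1 m, I3 m]
  -- summability facts
  have hGsum : Summable (fun m => ‖G m‖ ^ 2 * wt α m) :=
    (conv_summable hα hsum' n q).congr (fun m => by
      rw [show conv a n q m = G m from I3 m])
  have hZGsum : Summable (fun m => ‖ZG m‖ ^ 2 * wt α m) :=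
    (conv_summable hα hsum' n wZ).congr (fun m => by
      rw [show conv a n wZ m = ZG m from I1 m])
  have hB2sum : Summable (fun k => ‖G k‖ ^ 2 * wt α (k + 1)) := by
    apply Summable.of_nonneg_of_le
      (fun k => mul_nonneg (sq_nonneg _) (wt_nonneg α _)) ?_ hGsum
    intro k
    exact mul_le_mul_of_nonneg_left (wt_anti hα (Nat.le_succ k)) (sq_nonneg _)
  have hCsum : Summable (fun k => ‖G (k + 1)‖ ^ 2 * wt α (k + 1)) := by
    have := (summable_nat_add_iff (f := fun m => ‖G m‖ ^ 2 * wt α m) 1).mpr hGsum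
    simpa using this
  -- orthogonality
  have hδs : Summable (fun m => ‖(if m = 0 then (1:ℂ) else 0)‖ ^ 2 * wt α m) :=
    summable_of_ne_finset_zero (s := {0}) (fun b hb => by
      simp only [Finset.mem_singleton] at hb
      simp [hb])
  have hps := conv_summable hα hsum' n p
  have hFs : Summable (fun m =>
      ‖conv a n p m - (if m = 0 then 1 else 0)‖ ^ 2 * wt α m) := by
    apply Summable.of_nonneg_of_le
      (fun m => mul_nonneg (sq_nonneg _) (wt_nonneg α _)) ?_
      ((hps.mul_left 2).add (hδs.mul_left 2))
    intro m
    have h1 : ‖conv a n p m - (if m = 0 then (1:ℂ) else 0)‖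
        ≤ ‖conv a n p m‖ + ‖(if m = 0 then (1:ℂ) else 0)‖ := norm_sub_le _ _
    have h2 : ‖conv a n p m - (if m = 0 then (1:ℂ) else 0)‖ ^ 2
        ≤ 2 * ‖conv a n p m‖ ^ 2 + 2 * ‖(if m = 0 then (1:ℂ) else 0)‖ ^ 2 := by
      nlinarith [norm_nonneg (conv a n p m - (if m = 0 then (1:ℂ) else 0)),
        norm_nonneg (conv a n p m), norm_nonneg (if m = 0 then (1:ℂ) else 0),
        sq_nonneg (‖conv a n p m‖ - ‖(if m = 0 then (1:ℂ) else 0)‖)]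
    calc ‖conv a n p m - (if m = 0 then (1:ℂ) else 0)‖ ^ 2 * wt α m
        ≤ (2 * ‖conv a n p m‖ ^ 2 + 2 * ‖(if m = 0 then (1:ℂ) else 0)‖ ^ 2) * wt α m :=
          mul_le_mul_of_nonneg_right h2 (wt_nonneg α m)
      _ = 2 * (‖conv a n p m‖ ^ 2 * wt α m)
          + 2 * (‖(if m = 0 then (1:ℂ) else 0)‖ ^ 2 * wt α m) := by ring
  have hopt : ∀ c : ℂ, (∑' m, ‖conv a n p m - (if m = 0 then 1 else 0)‖ ^ 2 * wt α m)
      ≤ ∑' m, ‖(conv a n p m - (if m = 0 then 1 else 0)) + c * conv a n wZ m‖ ^ 2 * wt α m := by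
    intro c
    have h1 := hp' (fun k => p k + c * wZ k)
    have h3 : approxErr (wt α) a n (fun k => p k + c * wZ k)
        = ∑' m, ‖(conv a n p m - (if m = 0 then 1 else 0)) + c * conv a n wZ m‖ ^ 2 * wt α m := by
      refine tsum_congr (fun m => ?_)
      have h4 : (∑ k ∈ Finset.range (min m n + 1), (p k + c * wZ k) * a (m - k))
          = conv a n p m + c * conv a n wZ m := by
        rw [show conv a n p m = ∑ k ∈ Finset.range (min m n + 1), p k * a (m - k) from rfl,
          show conv a n wZ m = ∑ k ∈ Finset.range (min m n + 1), wZ k * a (m - k) from rfl,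
          Finset.mul_sum, ← Finset.sum_add_distrib]
        exact Finset.sum_congr rfl (fun k _ => by ring)
      show ‖(∑ k ∈ Finset.range (min m n + 1), (p k + c * wZ k) * a (m - k)) -
          (if m = 0 then 1 else 0)‖ ^ 2 * wt α m = _
      rw [h4]
      congr 2
      ring
    rw [h3] at h1
    exact h1
  have horth0 := orth_abstract (wt_nonneg α) hFs (conv_summable hα hsum' n wZ) hopt
  have horth : ∑' m, ZG m * (starRingEnd ℂ)
      (ZG m - z₀ * G m - (if m = 0 then 1 else 0)) * ((wt α m : ℝ) : ℂ) = 0 := by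
    refine Eq.trans (tsum_congr (fun m => ?_)) horth0
    rw [show conv a n wZ m = ZG m from I1 m, show conv a n p m = ZG m - z₀ * G m from I2 m]
  -- decompose the orthogonality relation
  have hu2sum : Summable (fun m => ZG m * (starRingEnd ℂ) (G m) * ((wt α m : ℝ) : ℂ)) :=
    prod_summable (wt_nonneg α) hZGsum hGsum
  have hu1sum : Summable (fun m => ZG m * (starRingEnd ℂ) (ZG m) * ((wt α m : ℝ) : ℂ)) :=
    prod_summable (wt_nonneg α) hZGsum hZGsum
  have hsplitpt : ∀ m, ZG m * (starRingEnd ℂ)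
      (ZG m - z₀ * G m - (if m = 0 then 1 else 0)) * ((wt α m : ℝ) : ℂ)
      = ZG m * (starRingEnd ℂ) (ZG m) * ((wt α m : ℝ) : ℂ)
        - (starRingEnd ℂ) z₀ * (ZG m * (starRingEnd ℂ) (G m) * ((wt α m : ℝ) : ℂ)) := by
    intro m
    have hδm : ZG m * (starRingEnd ℂ) (if m = 0 then (1:ℂ) else 0) = 0 := by
      rcases Nat.eq_zero_or_pos m with h | h
      · rw [hZGk m, if_pos h, zero_mul]
      · rw [if_neg (by omega), map_zero, mul_zero]
    calc ZG m * (starRingEnd ℂ) (ZG m - z₀ * G m - (if m = 0 then 1 else 0)) * ((wt α m : ℝ) : ℂ)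
        = (ZG m * (starRingEnd ℂ) (ZG m)
            - (starRingEnd ℂ) z₀ * (ZG m * (starRingEnd ℂ) (G m))
            - ZG m * (starRingEnd ℂ) (if m = 0 then (1:ℂ) else 0)) * ((wt α m : ℝ) : ℂ) := by
          rw [map_sub, map_sub, map_mul]
          ring
      _ = _ := by rw [hδm]; ring
  have hBS : ((∑' m, ‖ZG m‖ ^ 2 * wt α m : ℝ) : ℂ)
      = (starRingEnd ℂ) z₀ * (∑' m, ZG m * (starRingEnd ℂ) (G m) * ((wt α m : ℝ) : ℂ)) := by
    have h1 : (∑' m, (ZG m * (starRingEnd ℂ) (ZG m) * ((wt α m : ℝ) : ℂ)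
        - (starRingEnd ℂ) z₀ * (ZG m * (starRingEnd ℂ) (G m) * ((wt α m : ℝ) : ℂ)))) = 0 :=
      (tsum_congr (fun m => (hsplitpt m).symm)).trans horth
    rw [Summable.tsum_sub hu1sum (hu2sum.mul_left _), tsum_mul_left] at h1
    have h2 : (∑' m, ZG m * (starRingEnd ℂ) (ZG m) * ((wt α m : ℝ) : ℂ))
        = ((∑' m, ‖ZG m‖ ^ 2 * wt α m : ℝ) : ℂ) := by
      rw [Complex.ofReal_tsum]
      refine tsum_congr (fun m => ?_)
      rw [Complex.mul_conj, Complex.normSq_eq_norm_sq]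
      push_cast
      ring
    rw [h2] at h1
    linear_combination h1
  -- reindex
  have hB2eq : (∑' m, ‖ZG m‖ ^ 2 * wt α m) = ∑' k, ‖G k‖ ^ 2 * wt α (k + 1) := by
    rw [Summable.tsum_eq_zero_add hZGsum, hZGk 0, if_pos rfl, norm_zero,
      show (0:ℝ) ^ 2 = 0 by norm_num, zero_mul, zero_add]
    refine tsum_congr (fun k => ?_)
    rw [hZGk (k+1), if_neg (by omega), Nat.add_sub_cancel]
  have hSeq : (∑' m, ZG m * (starRingEnd ℂ) (G m) * ((wt α m : ℝ) : ℂ))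
      = ∑' k, G k * (starRingEnd ℂ) (G (k + 1)) * ((wt α (k + 1) : ℝ) : ℂ) := by
    rw [Summable.tsum_eq_zero_add hu2sum]
    rw [hZGk 0, if_pos rfl, zero_mul, zero_mul, zero_add]
    refine tsum_congr (fun k => ?_)
    rw [hZGk (k+1), if_neg (by omega), Nat.add_sub_cancel]
  -- abbreviations
  obtain ⟨B2, hB2def⟩ : ∃ x : ℝ, x = ∑' k, ‖G k‖ ^ 2 * wt α (k + 1) := ⟨_, rfl⟩
  obtain ⟨C, hCdef⟩ : ∃ x : ℝ, x = ∑' k, ‖G (k + 1)‖ ^ 2 * wt α (k + 1) := ⟨_, rfl⟩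
  obtain ⟨S, hSdef⟩ : ∃ x : ℂ,
      x = ∑' k, G k * (starRingEnd ℂ) (G (k + 1)) * ((wt α (k + 1) : ℝ) : ℂ) := ⟨_, rfl⟩
  rw [← hB2def] at hB2eq
  rw [← hSdef] at hSeq
  rw [hB2eq, hSeq] at hBS
  have hB2nn : 0 ≤ B2 := by
    rw [hB2def]
    exact tsum_nonneg (fun k => mul_nonneg (sq_nonneg _) (wt_nonneg α _))
  have hCnn : 0 ≤ C := by
    rw [hCdef]
    exact tsum_nonneg (fun k => mul_nonneg (sq_nonneg _) (wt_nonneg α _))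
  have habs : B2 = ‖z₀‖ * ‖S‖ := by
    have h := congrArg (‖·‖) hBS
    rwa [Complex.norm_real, Real.norm_of_nonneg hB2nn, norm_mul, RCLike.norm_conj] at h
  have hprodsum : Summable (fun k => ‖G k‖ * ‖G (k + 1)‖ * wt α (k + 1)) :=
    prod_norm_summable (W := fun j => wt α (j + 1)) (fun j => wt_nonneg α (j + 1))
      hB2sum hCsum
  have hSbound : ‖S‖ ≤ ∑' k, ‖G k‖ * ‖G (k + 1)‖ * wt α (k + 1) := by
    rw [hSdef]
    refine (norm_tsum_le_tsum_norm ?_).trans_eq (tsum_congr (fun k => ?_))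
    · exact hprodsum.congr (fun k =>
        (prod_norm_eq (W := fun j => wt α (j + 1)) (fun j => wt_nonneg α (j + 1))
          G (fun j => G (j + 1)) k).symm)
    · exact prod_norm_eq (W := fun j => wt α (j + 1)) (fun j => wt_nonneg α (j + 1))
        G (fun j => G (j + 1)) k
  have key : ∀ x : ℝ, 0 ≤ x →
      x * B2 ≤ ‖z₀‖ * ((B2 + x ^ 2 * C) / 2) := by
    intro x hx
    have h1 : x * ‖S‖ ≤ (B2 + x ^ 2 * C) / 2 := by
      calc x * ‖S‖ ≤ x * ∑' k, ‖G k‖ * ‖G (k + 1)‖ * wt α (k + 1) :=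
            mul_le_mul_of_nonneg_left hSbound hx
        _ = ∑' k, x * (‖G k‖ * ‖G (k + 1)‖ * wt α (k + 1)) := tsum_mul_left.symm
        _ ≤ ∑' k, ((1/2 : ℝ) * (‖G k‖ ^ 2 * wt α (k + 1))
              + (x ^ 2 / 2) * (‖G (k + 1)‖ ^ 2 * wt α (k + 1))) := by
            refine Summable.tsum_le_tsum (fun k => ?_) (hprodsum.mul_left x)
              ((hB2sum.mul_left _).add (hCsum.mul_left _))
            nlinarith [mul_nonneg (sq_nonneg (‖G k‖ - x * ‖G (k + 1)‖)) (wt_nonneg α (k + 1))]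
        _ = (B2 + x ^ 2 * C) / 2 := by
            rw [Summable.tsum_add (hB2sum.mul_left _) (hCsum.mul_left _), tsum_mul_left, tsum_mul_left,
              ← hB2def, ← hCdef]
            ring
    calc x * B2 = ‖z₀‖ * (x * ‖S‖) := by rw [habs]; ring
      _ ≤ ‖z₀‖ * ((B2 + x ^ 2 * C) / 2) :=
          mul_le_mul_of_nonneg_left h1 (norm_nonneg z₀)
  -- G is not identically zero
  have ha0sq : 0 < ‖a 0‖ ^ 2 := pow_pos (norm_pos_iff.mpr ha0) 2
  have hGne : ∃ m, G m ≠ 0 := by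
    by_contra hcon
    push_neg at hcon
    have hZG0 : ∀ m, ZG m = 0 := by
      intro m
      rw [hZGk m]
      rcases Nat.eq_zero_or_pos m with h | h
      · rw [if_pos h]
      · rw [if_neg (by omega), hcon]
    have hE1 : approxErr (wt α) a n p = 1 := by
      have h1 : ∀ m : ℕ, ‖(∑ k ∈ Finset.range (min m n + 1), p k * a (m - k)) -
          (if m = 0 then (1:ℂ) else 0)‖ ^ 2 * wt α m = (if m = 0 then (1:ℝ) else 0) := by
        intro m
        rw [I2 m, hZG0 m, hcon m]
        rcases Nat.eq_zero_or_pos m with h | h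
        · subst h
          rw [if_pos rfl, if_pos rfl, wt_zero]
          norm_num
        · rw [if_neg (by omega), if_neg (by omega)]
          norm_num
      exact (tsum_congr h1).trans (tsum_ite_eq 0 1)
    obtain ⟨A2, hA2def⟩ : ∃ x : ℝ, x = ∑' m, ‖a m‖ ^ 2 * wt α m := ⟨_, rfl⟩
    have hA2pos : 0 < A2 := by rw [hA2def]; exact hne
    obtain ⟨ε, hεdef⟩ : ∃ x : ℝ, x = 1 / (A2 + 1) := ⟨_, rfl⟩
    have hεpos : 0 < ε := by rw [hεdef]; exact one_div_pos.mpr (by linarith)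
    have hεA2 : ε * A2 < 1 := by
      rw [hεdef, div_mul_eq_mul_div, div_lt_one (by linarith)]
      linarith
    obtain ⟨c, hcdef⟩ : ∃ x : ℂ, x = ((ε : ℝ) : ℂ) * (starRingEnd ℂ) (a 0) := ⟨_, rfl⟩
    have hca0 : c * a 0 = ((ε * ‖a 0‖ ^ 2 : ℝ) : ℂ) := by
      rw [hcdef, mul_assoc, mul_comm ((starRingEnd ℂ) (a 0)) (a 0), Complex.mul_conj,
        Complex.normSq_eq_norm_sq]
      push_cast
      ring
    have hcnorm : ‖c‖ ^ 2 = ε ^ 2 * ‖a 0‖ ^ 2 := by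
      rw [hcdef, norm_mul, RCLike.norm_conj, Complex.norm_real,
        Real.norm_of_nonneg hεpos.le, mul_pow]
    have hconv2 : ∀ m, (∑ k ∈ Finset.range (min m n + 1),
        (if k = 0 then c else 0) * a (m - k)) = c * a m := by
      intro m
      rw [Finset.sum_eq_single 0 (fun b _ hb => by rw [if_neg hb, zero_mul])
        (fun h => absurd (Finset.mem_range.mpr (by omega)) h)]
      rw [if_pos rfl, Nat.sub_zero]
    have hterm2 : ∀ m : ℕ, ‖(∑ k ∈ Finset.range (min m n + 1),
        (if k = 0 then c else 0) * a (m - k)) - (if m = 0 then (1:ℂ) else 0)‖ ^ 2 * wt α m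
        = ‖c‖ ^ 2 * (‖a m‖ ^ 2 * wt α m)
          + (if m = 0 then (1 - 2 * (ε * ‖a 0‖ ^ 2)) else 0) := by
      intro m
      rw [hconv2 m]
      rcases Nat.eq_zero_or_pos m with h | h
      · subst h
        rw [if_pos rfl, if_pos rfl, wt_zero]
        have e0 : ‖c * a 0 - 1‖ ^ 2 = ‖c * a 0‖ ^ 2 + 1 - 2 * (c * a 0).re := by
          rw [Complex.sq_norm, Complex.sq_norm,
            Complex.normSq_sub]
          simp
        have hre : (c * a 0).re = ε * ‖a 0‖ ^ 2 := by rw [hca0, Complex.ofReal_re]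
        rw [e0, hre, norm_mul, mul_pow]
        ring
      · rw [if_neg (by omega), if_neg (by omega), sub_zero, norm_mul, mul_pow]
        ring
    have hE2 : approxErr (wt α) a n (fun k => if k = 0 then c else 0)
        = ‖c‖ ^ 2 * A2 + (1 - 2 * (ε * ‖a 0‖ ^ 2)) := by
      have hites : Summable (fun m : ℕ => if m = 0 then (1 - 2 * (ε * ‖a 0‖ ^ 2)) else 0) :=
        summable_of_ne_finset_zero (s := {0}) (fun b hb => by
          simp only [Finset.mem_singleton] at hb
          rw [if_neg hb])
      calc approxErr (wt α) a n (fun k => if k = 0 then c else 0)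
          = ∑' m, (‖c‖ ^ 2 * (‖a m‖ ^ 2 * wt α m)
            + (if m = 0 then (1 - 2 * (ε * ‖a 0‖ ^ 2)) else 0)) := tsum_congr hterm2
        _ = ‖c‖ ^ 2 * A2 + (1 - 2 * (ε * ‖a 0‖ ^ 2)) := by
            rw [Summable.tsum_add (hsum'.mul_left _) hites, tsum_mul_left, tsum_ite_eq, hA2def]
    have hle := hp' (fun k => if k = 0 then c else 0)
    rw [hE1, hE2, hcnorm] at hle
    nlinarith [mul_pos hεpos ha0sq, mul_lt_mul_of_pos_left hεA2 (mul_pos hεpos ha0sq)]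
  obtain ⟨m0, hm0⟩ := hGne
  have hB2pos : 0 < B2 := by
    have h1 : ‖G m0‖ ^ 2 * wt α (m0 + 1) ≤ B2 := by
      rw [hB2def]
      exact Summable.le_tsum hB2sum m0 (fun j _ => mul_nonneg (sq_nonneg _) (wt_nonneg α _))
    have h2 : 0 < ‖G m0‖ ^ 2 * wt α (m0 + 1) :=
      mul_pos (pow_pos (norm_pos_iff.mpr hm0) 2) (wt_pos α _)
    linarith
  have htpos : 0 < ‖z₀‖ := by
    rcases (norm_nonneg z₀).lt_or_eq with h | h
    · exact h
    · exfalso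
      rw [← h, zero_mul] at habs
      linarith
  have hCpos : 0 < C := by
    rcases hCnn.lt_or_eq with h | h
    · exact h
    · exfalso
      have hk := key (‖z₀‖) htpos.le
      rw [← h] at hk
      nlinarith [mul_pos htpos hB2pos]
  have hrC : (3/2 : ℝ) ^ α * C ≤ B2 := by
    have h1 : B2 = ‖G 0‖ ^ 2 * wt α (0 + 1) + ∑' k, ‖G (k + 1)‖ ^ 2 * wt α (k + 1 + 1) := by
      rw [hB2def]
      exact Summable.tsum_eq_zero_add hB2sum
    have hs2 : Summable (fun k => ‖G (k + 1)‖ ^ 2 * wt α (k + 1 + 1)) := by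
      apply Summable.of_nonneg_of_le (fun k => mul_nonneg (sq_nonneg _) (wt_nonneg α _)) ?_ hCsum
      intro k
      exact mul_le_mul_of_nonneg_left (wt_anti hα (by omega)) (sq_nonneg _)
    have h2 : ∑' k, (3/2 : ℝ) ^ α * (‖G (k + 1)‖ ^ 2 * wt α (k + 1))
        ≤ ∑' k, ‖G (k + 1)‖ ^ 2 * wt α (k + 1 + 1) := by
      refine Summable.tsum_le_tsum (fun k => ?_) (hCsum.mul_left _) hs2
      have h4 := mul_le_mul_of_nonneg_left (wt_ratio hα k) (sq_nonneg ‖G (k + 1)‖)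
      calc (3/2 : ℝ) ^ α * (‖G (k + 1)‖ ^ 2 * wt α (k + 1))
          = ‖G (k + 1)‖ ^ 2 * ((3/2 : ℝ) ^ α * wt α (k + 1)) := by ring
        _ ≤ ‖G (k + 1)‖ ^ 2 * wt α (k + 2) := h4
        _ = ‖G (k + 1)‖ ^ 2 * wt α (k + 1 + 1) := by norm_num
    rw [tsum_mul_left, ← hCdef] at h2
    have h3 : 0 ≤ ‖G 0‖ ^ 2 * wt α (0 + 1) := mul_nonneg (sq_nonneg _) (wt_nonneg α _)
    linarith
  obtain ⟨x, hxdef⟩ : ∃ x : ℝ, x = Real.sqrt (B2 / C) := ⟨_, rfl⟩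
  have hxpos : 0 < x := by
    rw [hxdef]
    exact Real.sqrt_pos.mpr (div_pos hB2pos hCpos)
  have hx2 : x ^ 2 * C = B2 := by
    rw [hxdef, Real.sq_sqrt (le_of_lt (div_pos hB2pos hCpos))]
    field_simp
  have hk := key x hxpos.le
  rw [hx2] at hk
  have hxt : x ≤ ‖z₀‖ := by nlinarith [hB2pos]
  have hr2 : (3/2 : ℝ) ^ α ≤ (‖z₀‖) ^ 2 := by
    have h5 : (3/2 : ℝ) ^ α * C ≤ x ^ 2 * C := by rw [hx2]; exact hrC
    have h6 : (3/2 : ℝ) ^ α ≤ x ^ 2 := le_of_mul_le_mul_right h5 hCpos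
    nlinarith [pow_le_pow_left₀ hxpos.le hxt 2]
  have h32 : ((3 : ℝ)/2) ^ (α/2) = Real.sqrt ((3/2 : ℝ) ^ α) := by
    rw [Real.sqrt_eq_rpow, ← Real.rpow_mul (by norm_num : (0:ℝ) ≤ 3/2)]
    congr 1
    ring
  rw [h32]
  calc Real.sqrt ((3/2 : ℝ) ^ α) ≤ Real.sqrt ((‖z₀‖) ^ 2) := Real.sqrt_le_sqrt hr2
    _ = ‖z₀‖ := Real.sqrt_sq (norm_nonneg z₀)
end

section
/- Let β > −1 and let ω be the Bergman-type weight for β. Then for any continuous linear operator T on ℓ²(ℕ, ℂ) satisfying the Jacobi identities for ω, ‖T‖ = (β+3)/√(β+2); equivalently, U_ω = (β+3)/(2√(β+2)). -/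
open scoped BigOperators

/-- Numerator of the quantity Θ_ω(a) = ⟨f, zf⟩_ω. -/
noncomputable def thetaNum (ω : ℕ → ℝ) (a : ℕ → ℂ) : ℂ :=
  ∑' n : ℕ, (starRingEnd ℂ) (a n) * a (n + 1) * (ω (n + 1) : ℂ)

/-- Denominator of the quantity Θ_ω(a) = ‖zf‖²_ω. -/
noncomputable def thetaDen (ω : ℕ → ℝ) (a : ℕ → ℂ) : ℝ :=
  ∑' n : ℕ, ‖a n‖ ^ 2 * ω (n + 1)

/-- The quantity Θ_ω(a) = ⟨f, zf⟩_ω / ‖zf‖²_ω. -/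
noncomputable def theta (ω : ℕ → ℝ) (a : ℕ → ℂ) : ℂ :=
  thetaNum ω a / (thetaDen ω a : ℂ)

/-- `a` is the coefficient sequence of a nonzero element of `H²_ω`. -/
def Admissible (ω : ℕ → ℝ) (a : ℕ → ℂ) : Prop :=
  Summable (fun n => ‖a n‖ ^ 2 * ω n) ∧ 0 < ∑' n : ℕ, ‖a n‖ ^ 2 * ω n

/-- The extremal quantity U_ω. -/
noncomputable def Uomega (ω : ℕ → ℝ) : ℝ :=
  sSup {x : ℝ | ∃ a : ℕ → ℂ, Admissible ω a ∧ x = ‖theta ω a‖}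

/-- The Bergman-type weight for parameter β: ω 0 = 1, ω (n+1) = ω n · (n+1)/(β+n+2). -/
noncomputable def bergW (β : ℝ) : ℕ → ℝ
  | 0 => 1
  | (n + 1) => bergW β n * ((n : ℝ) + 1) / (β + (n : ℝ) + 2)

namespace Aux
variable {β : ℝ}

noncomputable def lam (β : ℝ) : ℝ := (β + 3) / Real.sqrt (β + 2)
noncomputable def phi (β : ℝ) (n : ℕ) : ℝ := (β + n + 3) / ((n + 1) * Real.sqrt (β + 2))
noncomputable def psi (β : ℝ) (n : ℕ) : ℝ := Real.sqrt (β + 2) * (n + 1) / (n + 2)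
noncomputable def cc (β : ℝ) (n : ℕ) : ℝ := Real.sqrt ((β + n + 3) / (n + 2))

section basic
variable (hβ : -1 < β)
include hβ

lemma b2pos : (0:ℝ) < β + 2 := by linarith
lemma sqpos : 0 < Real.sqrt (β + 2) := Real.sqrt_pos.mpr (b2pos hβ)
lemma sq_sq : Real.sqrt (β + 2) ^ 2 = β + 2 := Real.sq_sqrt (b2pos hβ).le

omit hβ in
lemma natpos (n : ℕ) : (0:ℝ) ≤ (n:ℝ) := Nat.cast_nonneg n

lemma num_pos (n : ℕ) : (0:ℝ) < β + n + 3 := by have := Nat.cast_nonneg (α := ℝ) n; linarith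

lemma phi_pos (n : ℕ) : 0 < phi β n := by
  have := sqpos hβ
  exact div_pos (num_pos hβ n) (by positivity)

lemma psi_pos (n : ℕ) : 0 < psi β n := by
  have := sqpos hβ; apply div_pos (by positivity) (by positivity)

lemma cc_pos (n : ℕ) : 0 < cc β n :=
  Real.sqrt_pos.mpr (div_pos (num_pos hβ n) (by positivity))

lemma phi_mul_psi (n : ℕ) : phi β n * psi β n = (β + n + 3) / (n + 2) := by
  unfold phi psi
  have h1 : Real.sqrt (β + 2) ≠ 0 := (sqpos hβ).ne'
  have h2 : ((n:ℝ) + 1) ≠ 0 := by positivity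
  have h3 : ((n:ℝ) + 2) ≠ 0 := by positivity
  field_simp

lemma cc_sq (n : ℕ) : cc β n ^ 2 = (β + n + 3) / (n + 2) :=
  Real.sq_sqrt (div_nonneg (num_pos hβ n).le (by positivity))

lemma cc_eq_sqrt (n : ℕ) : cc β n = Real.sqrt (phi β n * psi β n) := by
  rw [phi_mul_psi hβ]; rfl

omit hβ in
lemma phi_zero : phi β 0 = lam β := by
  unfold phi lam; norm_num

lemma psi_add_phi (n : ℕ) : psi β n + phi β (n + 1) = lam β := by
  unfold psi phi lam
  have h1 : Real.sqrt (β + 2) ≠ 0 := (sqpos hβ).ne'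
  have h2 : Real.sqrt (β + 2) ^ 2 = β + 2 := sq_sq hβ
  have h3 : ((n:ℝ) + 2) ≠ 0 := by positivity
  have h4 : Real.sqrt (β + 2) * Real.sqrt (β + 2) = β + 2 := by
    nlinarith [h2]
  field_simp
  push_cast
  linear_combination ((n:ℝ)+1) * ((n:ℝ)+2) * h2

lemma phi_le (n : ℕ) : phi β n ≤ lam β := by
  unfold phi lam
  have hs := sqpos hβ
  have hn := Nat.cast_nonneg (α := ℝ) n
  rw [div_le_div_iff₀ (by positivity) hs]
  nlinarith [mul_nonneg (mul_nonneg hn (show (0:ℝ) ≤ β+2 by linarith)) hs.le]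

lemma psi_le (n : ℕ) : psi β n ≤ Real.sqrt (β + 2) := by
  unfold psi
  have hs := sqpos hβ
  rw [div_le_iff₀ (by positivity)]
  nlinarith [hs]

omit hβ in
lemma lam_eq : lam β = (β + 3) / Real.sqrt (β + 2) := rfl

lemma lam_pos : 0 < lam β := by
  rw [← phi_zero]; exact phi_pos hβ 0

/-- The positive sequence v with `cc * v(n+1) = phi * v n`. -/
noncomputable def vv (β : ℝ) : ℕ → ℝ
  | 0 => 1
  | n + 1 => vv β n * phi β n / cc β n

lemma vv_pos (n : ℕ) : 0 < vv β n := by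
  induction n with
  | zero => norm_num [vv]
  | succ n ih =>
    show 0 < vv β n * phi β n / cc β n
    exact div_pos (mul_pos ih (phi_pos hβ n)) (cc_pos hβ n)

lemma cc_vv_succ (n : ℕ) : cc β n * vv β (n + 1) = phi β n * vv β n := by
  show cc β n * (vv β n * phi β n / cc β n) = _
  field_simp [(cc_pos hβ n).ne']

lemma cc_vv (n : ℕ) : cc β n * vv β n = psi β n * vv β (n + 1) := by
  show cc β n * vv β n = psi β n * (vv β n * phi β n / cc β n)
  have hc : cc β n ^ 2 = phi β n * psi β n := by rw [cc_sq hβ n, ← phi_mul_psi hβ n]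
  field_simp [(cc_pos hβ n).ne']
  linear_combination vv β n * hc

lemma vv_ratio (n : ℕ) : vv β (n + 1) ^ 2 / vv β n ^ 2 = phi β n / psi β n := by
  have h1 := cc_vv_succ hβ n
  have h2 := cc_vv hβ n
  have hv := vv_pos hβ n
  have hv' := vv_pos hβ (n+1)
  have hψ := psi_pos hβ n
  rw [div_eq_div_iff (pow_pos hv 2).ne' hψ.ne']
  nlinarith [h1, h2]

lemma summable_vv_sq : Summable (fun n => vv β n ^ 2) := by
  apply summable_of_ratio_test_tendsto_lt_one
    (l := 1 / (β + 2)) ((div_lt_one (b2pos hβ)).mpr (by linarith))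
    (Filter.Eventually.of_forall fun n => (pow_pos (vv_pos hβ n) 2).ne')
  have key : ∀ n : ℕ, ‖vv β (n+1) ^ 2‖ / ‖vv β n ^ 2‖
      = (1 + (β+2)/((n:ℝ)+1)) * (1 + 1/((n:ℝ)+1)) * (1/(β+2)) := by
    intro n
    have hv := vv_pos hβ n
    have hv' := vv_pos hβ (n+1)
    rw [Real.norm_of_nonneg (by positivity), Real.norm_of_nonneg (by positivity),
      vv_ratio hβ n]
    unfold phi psi
    have hs := sqpos hβ
    have h2 := sq_sq hβ
    have hn1 : ((n:ℝ)+1) ≠ 0 := by positivity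
    have hn2 : ((n:ℝ)+2) ≠ 0 := by positivity
    rw [div_div_eq_mul_div, div_mul_eq_mul_div, div_div]
    have hden : ((n:ℝ)+1)*Real.sqrt (β+2)*(Real.sqrt (β+2)*((n:ℝ)+1)) = (β+2)*((n:ℝ)+1)^2 := by
      linear_combination ((n:ℝ)+1)^2 * h2
    rw [hden]
    have hb2 : β + 2 ≠ 0 := (b2pos hβ).ne'
    field_simp
    ring
  simp only [key]
  have t1 : Filter.Tendsto (fun n : ℕ => (β+2)/((n:ℝ)+1)) Filter.atTop (nhds 0) := by
    have : Filter.Tendsto (fun n : ℕ => 1/((n:ℝ)+1)) Filter.atTop (nhds 0) :=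
      tendsto_one_div_add_atTop_nhds_zero_nat
    have h := this.const_mul (β+2)
    simpa [div_eq_mul_inv, mul_comm] using h
  have t2 : Filter.Tendsto (fun n : ℕ => 1/((n:ℝ)+1)) Filter.atTop (nhds 0) :=
    tendsto_one_div_add_atTop_nhds_zero_nat
  have := (((tendsto_const_nhds (x := (1:ℝ))).add t1).mul
    ((tendsto_const_nhds (x := (1:ℝ))).add t2)).mul
    (tendsto_const_nhds (x := 1/(β+2)))
  simpa using this

omit hβ in
lemma cs2 (p q P Q x y : ℝ) (hp : 0 ≤ p) (hq : 0 ≤ q) (hP : 0 ≤ P) (hQ : 0 ≤ Q) :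
    (Real.sqrt (p*P) * x + Real.sqrt (q*Q) * y)^2 ≤ (p+q) * (P*x^2 + Q*y^2) := by
  rw [Real.sqrt_mul hp, Real.sqrt_mul hq]
  have e1 : Real.sqrt p ^ 2 = p := Real.sq_sqrt hp
  have e2 : Real.sqrt q ^ 2 = q := Real.sq_sqrt hq
  have e3 : Real.sqrt P ^ 2 = P := Real.sq_sqrt hP
  have e4 : Real.sqrt Q ^ 2 = Q := Real.sq_sqrt hQ
  set a := Real.sqrt p with ha
  set b := Real.sqrt q with hb
  set A := Real.sqrt P with hA
  set B := Real.sqrt Q with hB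
  rw [← e1, ← e2, ← e3, ← e4]
  nlinarith [sq_nonneg (a * B * y - b * A * x)]

lemma schur0 (y : ℝ) : (cc β 0 * y)^2 = lam β * (psi β 0 * y^2) := by
  have hc : cc β 0 ^ 2 = phi β 0 * psi β 0 := by rw [cc_sq hβ 0, ← phi_mul_psi hβ 0]
  rw [phi_zero] at hc
  linear_combination y^2 * hc

lemma schur_succ (n : ℕ) (x y : ℝ) :
    (cc β n * x + cc β (n+1) * y)^2 ≤ lam β * (phi β n * x^2 + psi β (n+1) * y^2) := by
  have h := cs2 (psi β n) (phi β (n+1)) (phi β n) (psi β (n+1)) x y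
    (psi_pos hβ n).le (phi_pos hβ (n+1)).le (phi_pos hβ n).le (psi_pos hβ (n+1)).le
  rw [psi_add_phi hβ n] at h
  have e1 : cc β n = Real.sqrt (psi β n * phi β n) := by
    rw [mul_comm]; exact cc_eq_sqrt hβ n
  have e2 : cc β (n+1) = Real.sqrt (phi β (n+1) * psi β (n+1)) := cc_eq_sqrt hβ (n+1)
  rw [e1, e2]
  exact h

lemma amgm (n : ℕ) (x y : ℝ) : 2*(cc β n * (x*y)) ≤ phi β n * x^2 + psi β n * y^2 := by
  rw [cc_eq_sqrt hβ n, Real.sqrt_mul (phi_pos hβ n).le]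
  have e3 : Real.sqrt (phi β n) ^ 2 = phi β n := Real.sq_sqrt (phi_pos hβ n).le
  have e4 : Real.sqrt (psi β n) ^ 2 = psi β n := Real.sq_sqrt (psi_pos hβ n).le
  nlinarith [sq_nonneg (Real.sqrt (phi β n) * x - Real.sqrt (psi β n) * y)]

lemma phi_h_summable {h : ℕ → ℝ} (hpos : ∀ n, 0 ≤ h n) (hs : Summable h) :
    Summable (fun n => phi β n * h n) :=
  Summable.of_nonneg_of_le (fun n => mul_nonneg (phi_pos hβ n).le (hpos n))
    (fun n => mul_le_mul_of_nonneg_right (phi_le hβ n) (hpos n)) (hs.mul_left (lam β))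

lemma psi_h_summable {h : ℕ → ℝ} (hpos : ∀ n, 0 ≤ h n) (hs : Summable h) :
    Summable (fun n => psi β n * h (n+1)) := by
  have hs1 : Summable (fun n => h (n+1)) := (summable_nat_add_iff 1).mpr hs
  exact Summable.of_nonneg_of_le (fun n => mul_nonneg (psi_pos hβ n).le (hpos (n+1)))
    (fun n => mul_le_mul_of_nonneg_right (psi_le hβ n) (hpos (n+1)))
    (hs1.mul_left (Real.sqrt (β+2)))

lemma key_sum {h : ℕ → ℝ} (hpos : ∀ n, 0 ≤ h n) (hs : Summable h) :
    ∑' n, phi β n * h n + ∑' n, psi β n * h (n+1) = lam β * ∑' n, h n := by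
  set G : ℕ → ℝ := fun m => Nat.casesOn m 0 (fun k => psi β k * h (k+1)) with hGdef
  have hG1 : (fun n => G (n+1)) = fun n => psi β n * h (n+1) := rfl
  have hG : Summable G := by
    apply (summable_nat_add_iff 1).mp
    rw [hG1]
    exact psi_h_summable hβ hpos hs
  have hφ : Summable (fun n => phi β n * h n) := phi_h_summable hβ hpos hs
  have hsplit : ∀ m, lam β * h m = phi β m * h m + G m := by
    intro m
    cases m with
    | zero => show lam β * h 0 = phi β 0 * h 0 + 0; rw [phi_zero]; ring
    | succ k =>
      show lam β * h (k+1) = phi β (k+1) * h (k+1) + psi β k * h (k+1)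
      linear_combination h (k+1) * (psi_add_phi hβ k).symm
  have h1 : ∑' n, psi β n * h (n+1) = ∑' n, G n := by
    rw [Summable.tsum_eq_zero_add hG, show G 0 = 0 from rfl, zero_add, hG1]
  rw [h1, ← Summable.tsum_add hφ hG, ← tsum_mul_left]
  exact tsum_congr fun m => (hsplit m).symm

end basic

section berg
variable (hβ : -1 < β)
include hβ

omit hβ in
lemma bergW_succ (n : ℕ) : bergW β (n+1) = bergW β n * ((n:ℝ)+1) / (β + (n:ℝ) + 2) := rfl

lemma bergW_pos (n : ℕ) : 0 < bergW β n := by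
  induction n with
  | zero => norm_num [bergW]
  | succ n ih =>
    rw [bergW_succ]
    have : (0:ℝ) ≤ (n:ℝ) := Nat.cast_nonneg n
    exact div_pos (mul_pos ih (by linarith)) (by linarith)

lemma bergW_ratio (n : ℕ) : bergW β (n+1) / bergW β (n+2) = (β + (n:ℝ) + 3) / ((n:ℝ)+2) := by
  have h2 := bergW_succ (β := β) (n+1)
  push_cast at h2
  rw [h2]
  have hb := bergW_pos hβ (n+1)
  have : (0:ℝ) ≤ (n:ℝ) := Nat.cast_nonneg n
  have hd : (0:ℝ) < β + ((n:ℝ)+1) + 2 := by linarith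
  field_simp
  ring

lemma sqrt_bergW_ratio (n : ℕ) : Real.sqrt (bergW β (n+1) / bergW β (n+2)) = cc β n := by
  rw [bergW_ratio hβ n]; rfl

lemma bergW_anti (n : ℕ) : bergW β (n+1) ≤ bergW β n := by
  rw [bergW_succ]
  have hb := bergW_pos hβ n
  have : (0:ℝ) ≤ (n:ℝ) := Nat.cast_nonneg n
  rw [div_le_iff₀ (by linarith)]
  nlinarith

lemma bergW_succ_le (n : ℕ) : bergW β (n+1) ≤ (β+3) * bergW β (n+2) := by
  have h := bergW_ratio hβ n
  have hb := bergW_pos hβ (n+2)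
  have hn : (0:ℝ) ≤ (n:ℝ) := Nat.cast_nonneg n
  rw [div_eq_iff hb.ne'] at h
  rw [h]
  have : (β + (n:ℝ) + 3) / ((n:ℝ)+2) ≤ β + 3 := by
    rw [div_le_iff₀ (by linarith)]
    nlinarith
  nlinarith [this, hb]

end berg

section lp2

lemma rpow_toReal_two (x : ℝ) : x ^ (2:ENNReal).toReal = x ^ 2 := by
  rw [show (2:ENNReal).toReal = ((2:ℕ):ℝ) by norm_num, Real.rpow_natCast]

lemma lp2_summable (w : lp (fun _ : ℕ => ℂ) 2) :
    Summable (fun n => ‖(w : ∀ _ : ℕ, ℂ) n‖ ^ 2) := by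
  have h := (lp.memℓp w).summable (p := 2) (by norm_num)
  simpa [rpow_toReal_two] using h

lemma lp2_norm_sq (w : lp (fun _ : ℕ => ℂ) 2) :
    ‖w‖ ^ 2 = ∑' n, ‖(w : ∀ _ : ℕ, ℂ) n‖ ^ 2 := by
  have h := lp.norm_rpow_eq_tsum (p := 2) (by norm_num) w
  rw [rpow_toReal_two] at h
  rw [h]
  exact tsum_congr fun n => (rpow_toReal_two _)

lemma memℓp_two_of_sq_summable {f : ℕ → ℂ} (h : Summable (fun n => ‖f n‖ ^ 2)) :
    Memℓp f 2 := memℓp_gen (by simpa [rpow_toReal_two] using h)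

end lp2

section op
variable (hβ : -1 < β) {T : lp (fun _ : ℕ => ℂ) 2 →L[ℂ] lp (fun _ : ℕ => ℂ) 2}
  (hT : JacobiFor (bergW β) T)
include hβ hT

lemma T_apply_zero (w : lp (fun _ : ℕ => ℂ) 2) :
    (T w : ∀ _ : ℕ, ℂ) 0 = ((cc β 0 : ℝ) : ℂ) * (w : ∀ _ : ℕ, ℂ) 1 := by
  have h := (hT w).1
  rwa [show bergW β 1 / bergW β 2 = bergW β (0+1) / bergW β (0+2) from rfl,
    show Real.sqrt (bergW β (0+1) / bergW β (0+2)) = cc β 0 from sqrt_bergW_ratio hβ 0] at h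

lemma T_apply_succ (w : lp (fun _ : ℕ => ℂ) 2) (m : ℕ) :
    (T w : ∀ _ : ℕ, ℂ) (m + 1) =
      ((cc β m : ℝ) : ℂ) * (w : ∀ _ : ℕ, ℂ) m
        + ((cc β (m+1) : ℝ) : ℂ) * (w : ∀ _ : ℕ, ℂ) (m + 2) := by
  have h := (hT w).2 (m+1) (Nat.le_add_left 1 m)
  rwa [show (m + 1 : ℕ) - 1 = m from rfl,
    show Real.sqrt (bergW β (m+1) / bergW β (m+1+1)) = cc β m from sqrt_bergW_ratio hβ m,
    show Real.sqrt (bergW β (m+1+1) / bergW β (m+1+2)) = cc β (m+1) from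
      sqrt_bergW_ratio hβ (m+1)] at h

lemma T_norm_le (w : lp (fun _ : ℕ => ℂ) 2) : ‖T w‖ ≤ lam β * ‖w‖ := by
  set g : ℕ → ℝ := fun n => ‖(w : ∀ _ : ℕ, ℂ) n‖ with hg
  set h : ℕ → ℝ := fun n => g n ^ 2 with hh
  have hpos : ∀ n, 0 ≤ h n := fun n => sq_nonneg _
  have hsum : Summable h := lp2_summable w
  have hφ : Summable (fun n => phi β n * h n) := phi_h_summable hβ hpos hsum
  have hψ : Summable (fun n => psi β n * h (n+1)) := psi_h_summable hβ hpos hsum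
  have hh2 : Summable (fun m => h (m+2)) := (summable_nat_add_iff 2).mpr hsum
  have hψ2 : Summable (fun m => psi β (m+1) * h (m+2)) :=
    Summable.of_nonneg_of_le (fun m => mul_nonneg (psi_pos hβ (m+1)).le (hpos (m+2)))
      (fun m => mul_le_mul_of_nonneg_right (psi_le hβ (m+1)) (hpos (m+2)))
      (hh2.mul_left (Real.sqrt (β+2)))
  set D : ℕ → ℝ := fun n => Nat.casesOn n (lam β * (psi β 0 * h 1))
    (fun m => lam β * (phi β m * h m + psi β (m+1) * h (m+2))) with hD
  have hDsucc : Summable (fun m => D (m+1)) := by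
    have := (hφ.add hψ2).mul_left (lam β)
    simpa using this
  have hDsum : Summable D := (summable_nat_add_iff 1).mp hDsucc
  have hcoord : ∀ n, ‖(T w : ∀ _ : ℕ, ℂ) n‖ ^ 2 ≤ D n := by
    intro n
    cases n with
    | zero =>
      rw [T_apply_zero hβ hT w]
      have : ‖((cc β 0 : ℝ) : ℂ) * (w : ∀ _ : ℕ, ℂ) 1‖ = cc β 0 * g 1 := by
        rw [norm_mul, Complex.norm_real, Real.norm_eq_abs, abs_of_nonneg (cc_pos hβ 0).le]
      rw [this]
      exact le_of_eq (schur0 hβ (g 1))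
    | succ m =>
      rw [T_apply_succ hβ hT w m]
      have hb : ‖((cc β m : ℝ) : ℂ) * (w : ∀ _ : ℕ, ℂ) m
          + ((cc β (m+1) : ℝ) : ℂ) * (w : ∀ _ : ℕ, ℂ) (m + 2)‖
          ≤ cc β m * g m + cc β (m+1) * g (m+2) := by
        refine (norm_add_le _ _).trans (le_of_eq ?_)
        rw [norm_mul, norm_mul, Complex.norm_real, Complex.norm_real, Real.norm_eq_abs,
          Real.norm_eq_abs, abs_of_nonneg (cc_pos hβ m).le, abs_of_nonneg (cc_pos hβ (m+1)).le]
      have hnn : (0:ℝ) ≤ cc β m * g m + cc β (m+1) * g (m+2) := by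
        have := cc_pos hβ m; have := cc_pos hβ (m+1)
        have : 0 ≤ g m := norm_nonneg _
        positivity
      calc ‖_ + _‖ ^ 2 ≤ (cc β m * g m + cc β (m+1) * g (m+2)) ^ 2 := by
            exact pow_le_pow_left₀ (norm_nonneg _) hb 2
        _ ≤ lam β * (phi β m * (g m)^2 + psi β (m+1) * (g (m+2))^2) := schur_succ hβ m _ _
        _ = D (m+1) := rfl
  have hTsum : Summable (fun n => ‖(T w : ∀ _ : ℕ, ℂ) n‖ ^ 2) := lp2_summable (T w)
  have hle : ∑' n, ‖(T w : ∀ _ : ℕ, ℂ) n‖ ^ 2 ≤ ∑' n, D n := Summable.tsum_le_tsum hcoord hTsum hDsum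
  have hDval : ∑' n, D n = lam β ^ 2 * ∑' n, h n := by
    have e1 : ∑' n, D n = D 0 + ∑' m, D (m+1) := Summable.tsum_eq_zero_add hDsum
    have e2 : ∑' m, D (m+1)
        = lam β * (∑' m, phi β m * h m + ∑' m, psi β (m+1) * h (m+2)) := by
      rw [← Summable.tsum_add hφ hψ2, ← tsum_mul_left]
    have e3 : ∑' n, psi β n * h (n+1)
        = psi β 0 * h 1 + ∑' m, psi β (m+1) * h (m+2) := Summable.tsum_eq_zero_add hψ
    have e4 := key_sum hβ hpos hsum
    have : D 0 = lam β * (psi β 0 * h 1) := rfl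
    rw [e1, e2, this]
    linear_combination lam β * e4 - lam β * e3
  have hfin : ‖T w‖ ^ 2 ≤ (lam β * ‖w‖) ^ 2 := by
    rw [lp2_norm_sq (T w)]
    calc ∑' n, ‖(T w : ∀ _ : ℕ, ℂ) n‖ ^ 2 ≤ lam β ^ 2 * ∑' n, h n := hle.trans hDval.le
      _ = (lam β * ‖w‖) ^ 2 := by rw [← lp2_norm_sq w]; ring
  calc ‖T w‖ = Real.sqrt (‖T w‖ ^ 2) := (Real.sqrt_sq (norm_nonneg _)).symm
    _ ≤ Real.sqrt ((lam β * ‖w‖) ^ 2) := Real.sqrt_le_sqrt hfin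
    _ = lam β * ‖w‖ := Real.sqrt_sq (mul_nonneg (lam_pos hβ).le (norm_nonneg _))

omit hT in
lemma Vc_memℓp : Memℓp (fun n => ((vv β n : ℝ) : ℂ)) 2 := by
  apply memℓp_two_of_sq_summable
  have : (fun n => ‖((vv β n : ℝ) : ℂ)‖ ^ 2) = fun n => vv β n ^ 2 := by
    funext n
    rw [Complex.norm_real, Real.norm_eq_abs, sq_abs]
  rw [this]
  exact summable_vv_sq hβ

lemma T_eigen :
    T ⟨_, Vc_memℓp hβ⟩ = ((lam β : ℝ) : ℂ) • (⟨_, Vc_memℓp hβ⟩ : lp (fun _ : ℕ => ℂ) 2) := by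
  apply lp.ext
  funext n
  have hcoe : ∀ k, ((⟨_, Vc_memℓp hβ⟩ : lp (fun _ : ℕ => ℂ) 2) : ∀ _ : ℕ, ℂ) k
      = ((vv β k : ℝ) : ℂ) := fun k => rfl
  have hsm : (↑(((lam β : ℝ) : ℂ) • (⟨_, Vc_memℓp hβ⟩ : lp (fun _ : ℕ => ℂ) 2)) : ∀ _ : ℕ, ℂ) n
      = ((lam β : ℝ) : ℂ) * ((vv β n : ℝ) : ℂ) := by
    rw [lp.coeFn_smul]; rfl
  rw [hsm]
  cases n with
  | zero =>
    rw [T_apply_zero hβ hT _, hcoe 1, ← Complex.ofReal_mul, ← Complex.ofReal_mul]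
    congr 1
    have h1 := cc_vv_succ hβ 0
    rw [phi_zero] at h1
    show cc β 0 * vv β (0+1) = lam β * vv β 0
    exact h1
  | succ m =>
    rw [T_apply_succ hβ hT _ m, hcoe m, hcoe (m+2), ← Complex.ofReal_mul, ← Complex.ofReal_mul,
      ← Complex.ofReal_mul, ← Complex.ofReal_add]
    congr 1
    have h1 := cc_vv hβ m
    have h2 := cc_vv_succ hβ (m+1)
    have h3 := psi_add_phi hβ m
    show cc β m * vv β m + cc β (m+1) * vv β (m+1+1) = lam β * vv β (m+1)
    rw [h1, h2]
    linear_combination vv β (m+1) * h3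

lemma T_norm_ge : lam β ≤ ‖T‖ := by
  set vt : lp (fun _ : ℕ => ℂ) 2 := ⟨_, Vc_memℓp hβ⟩ with hvt
  have h1 : ‖T vt‖ = lam β * ‖vt‖ := by
    rw [T_eigen hβ hT, norm_smul, Complex.norm_real, Real.norm_eq_abs,
      abs_of_pos (lam_pos hβ)]
  have h2 : vt ≠ 0 := by
    intro h0
    have : (vt : ∀ _ : ℕ, ℂ) 0 = 0 := by rw [h0]; rfl
    have h3 : ((vv β 0 : ℝ) : ℂ) = 0 := this
    rw [Complex.ofReal_eq_zero] at h3
    exact (vv_pos hβ 0).ne' h3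
  have h4 := T.le_opNorm vt
  rw [h1] at h4
  have h3 : (0:ℝ) < ‖vt‖ := norm_pos_iff.mpr h2
  exact le_of_mul_le_mul_right h4 h3

end op

section theta
variable (hβ : -1 < β)
include hβ

lemma bergW_ratio' (n : ℕ) : bergW β n / bergW β (n+1) = (β + (n:ℝ) + 2) / ((n:ℝ)+1) := by
  have h2 := bergW_succ (β := β) n
  rw [h2]
  have hb := bergW_pos hβ n
  have hn : (0:ℝ) ≤ (n:ℝ) := Nat.cast_nonneg n
  have hd : (0:ℝ) < β + (n:ℝ) + 2 := by linarith
  field_simp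

lemma cc_w_eq (n : ℕ) (x y : ℝ) :
    cc β n * ((x * Real.sqrt (bergW β (n+1))) * (y * Real.sqrt (bergW β (n+2))))
      = x * y * bergW β (n+1) := by
  rw [← sqrt_bergW_ratio hβ n]
  have h1 := bergW_pos hβ (n+1)
  have h2 := bergW_pos hβ (n+2)
  rw [Real.sqrt_div h1.le]
  set s1 := Real.sqrt (bergW β (n+1)) with hs1
  set s2 := Real.sqrt (bergW β (n+2)) with hs2
  have e1 : s1 * s1 = bergW β (n+1) := Real.mul_self_sqrt h1.le
  have e2 : s2 ≠ 0 := (Real.sqrt_pos.mpr h2).ne'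
  field_simp
  linear_combination (x * y) * e1

lemma theta_le {a : ℕ → ℂ} (ha : Admissible (bergW β) a) :
    ‖theta (bergW β) a‖ ≤ lam β / 2 := by
  set ω := bergW β with hω
  set g : ℕ → ℝ := fun n => ‖a n‖ with hg
  set h : ℕ → ℝ := fun n => ‖a n‖ ^ 2 * ω (n+1) with hh
  have hωpos : ∀ n, 0 < ω n := bergW_pos hβ
  have hpos : ∀ n, 0 ≤ h n := fun n => mul_nonneg (sq_nonneg _) (hωpos (n+1)).le
  have hsum : Summable h :=
    ha.1.of_nonneg_of_le hpos
      (fun n => mul_le_mul_of_nonneg_left (bergW_anti hβ n) (sq_nonneg _))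
  have hφ : Summable (fun n => phi β n * h n) := phi_h_summable hβ hpos hsum
  have hψ : Summable (fun n => psi β n * h (n+1)) := psi_h_summable hβ hpos hsum
  have hdenpos : 0 < ∑' n, h n := by
    have hex : ∃ n, a n ≠ 0 := by
      by_contra hC
      push_neg at hC
      have : ∑' n : ℕ, ‖a n‖ ^ 2 * ω n = 0 := by
        have : ∀ n, ‖a n‖ ^ 2 * ω n = 0 := fun n => by rw [hC n]; simp
        rw [tsum_congr this]; exact tsum_zero
      have ha2 := ha.2
      rw [this] at ha2
      exact lt_irrefl 0 ha2
    obtain ⟨n0, hn0⟩ := hex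
    refine Summable.tsum_pos hsum hpos n0 ?_
    have : 0 < g n0 := norm_pos_iff.mpr hn0
    exact mul_pos (by positivity) (hωpos (n0+1))
  have hbound : ∀ n, g n * g (n+1) * ω (n+1)
      ≤ (1/2) * (phi β n * h n + psi β n * h (n+1)) := by
    intro n
    have he : g n * g (n+1) * ω (n+1)
        = cc β n * ((g n * Real.sqrt (ω (n+1))) * (g (n+1) * Real.sqrt (ω (n+2)))) :=
      (cc_w_eq hβ n _ _).symm
    have hw1 : (g n * Real.sqrt (ω (n+1))) ^ 2 = h n := by
      rw [mul_pow, Real.sq_sqrt (hωpos (n+1)).le]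
    have hw2 : (g (n+1) * Real.sqrt (ω (n+2))) ^ 2 = h (n+1) := by
      rw [mul_pow, Real.sq_sqrt (hωpos (n+2)).le]
    have := amgm hβ n (g n * Real.sqrt (ω (n+1))) (g (n+1) * Real.sqrt (ω (n+2)))
    rw [hw1, hw2] at this
    rw [he]
    linarith
  have hsb : Summable (fun n => g n * g (n+1) * ω (n+1)) := by
    refine Summable.of_nonneg_of_le
      (fun n => mul_nonneg (mul_nonneg (norm_nonneg _) (norm_nonneg _)) (hωpos (n+1)).le)
      hbound ?_
    exact (hφ.add hψ).mul_left (1/2)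
  have hterm : ∀ n, ‖(starRingEnd ℂ) (a n) * a (n+1) * ((ω (n+1) : ℝ) : ℂ)‖
      = g n * g (n+1) * ω (n+1) := by
    intro n
    rw [norm_mul, norm_mul, RCLike.norm_conj, Complex.norm_real, Real.norm_eq_abs,
      abs_of_pos (hωpos (n+1))]
  have hnum : ‖thetaNum ω a‖ ≤ ∑' n, g n * g (n+1) * ω (n+1) := by
    have h1 : Summable (fun n => ‖(starRingEnd ℂ) (a n) * a (n+1) * ((ω (n+1) : ℝ) : ℂ)‖) := by
      rw [show (fun n => ‖(starRingEnd ℂ) (a n) * a (n+1) * ((ω (n+1) : ℝ) : ℂ)‖)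
        = fun n => g n * g (n+1) * ω (n+1) from funext hterm]
      exact hsb
    refine (norm_tsum_le_tsum_norm h1).trans (le_of_eq (tsum_congr hterm))
  have hSS : ∑' n, g n * g (n+1) * ω (n+1) ≤ lam β / 2 * ∑' n, h n := by
    have hk := key_sum hβ hpos hsum
    have hA := Summable.tsum_le_tsum hbound hsb ((hφ.add hψ).mul_left (1/2))
    rw [tsum_mul_left, Summable.tsum_add hφ hψ] at hA
    linarith
  have habs : ‖theta ω a‖ = ‖thetaNum ω a‖ / (∑' n, h n) := by
    rw [theta, norm_div, Complex.norm_real, thetaDen, Real.norm_eq_abs, abs_of_pos hdenpos]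
  rw [habs, div_le_iff₀ hdenpos]
  exact hnum.trans hSS

lemma theta_extremal :
    ∃ a : ℕ → ℂ, Admissible (bergW β) a ∧ ‖theta (bergW β) a‖ = lam β / 2 := by
  set ω := bergW β with hω
  have hωpos : ∀ n, 0 < ω n := bergW_pos hβ
  set q : ℕ → ℝ := fun n => vv β n / Real.sqrt (ω (n+1)) with hq
  have hqpos : ∀ n, 0 < q n := fun n =>
    div_pos (vv_pos hβ n) (Real.sqrt_pos.mpr (hωpos (n+1)))
  have hq_sq : ∀ n, q n ^ 2 = vv β n ^ 2 / ω (n+1) := by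
    intro n
    rw [hq]
    rw [div_pow, Real.sq_sqrt (hωpos (n+1)).le]
  have hnorm : ∀ n, ‖((q n : ℝ) : ℂ)‖ = q n := fun n => by
    rw [Complex.norm_real, Real.norm_eq_abs, abs_of_pos (hqpos n)]
  have hterm_eq : ∀ n, ‖((q n : ℝ) : ℂ)‖ ^ 2 * ω n = vv β n ^ 2 * ((β + (n:ℝ) + 2)/((n:ℝ)+1)) := by
    intro n
    rw [hnorm n, hq_sq n, ← bergW_ratio' hβ n]
    field_simp
    rfl
  have hsum1 : Summable (fun n => ‖((q n : ℝ) : ℂ)‖ ^ 2 * ω n) := by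
    refine Summable.of_nonneg_of_le
      (fun n => mul_nonneg (sq_nonneg _) (hωpos n).le) (fun n => ?_)
      ((summable_vv_sq hβ).mul_left (β + 2))
    rw [hterm_eq n]
    have hn : (0:ℝ) ≤ (n:ℝ) := Nat.cast_nonneg n
    have hr : (β + (n:ℝ) + 2)/((n:ℝ)+1) ≤ β + 2 := by
      rw [div_le_iff₀ (by linarith)]
      nlinarith
    calc vv β n ^ 2 * ((β + (n:ℝ) + 2)/((n:ℝ)+1)) ≤ vv β n ^ 2 * (β + 2) :=
          mul_le_mul_of_nonneg_left hr (sq_nonneg _)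
      _ = (β + 2) * vv β n ^ 2 := by ring
  have hden_eq : ∀ n, ‖((q n : ℝ) : ℂ)‖ ^ 2 * ω (n+1) = vv β n ^ 2 := by
    intro n
    rw [hnorm n, hq_sq n, div_mul_cancel₀ _ (hωpos (n+1)).ne']
  have hS : (0:ℝ) < ∑' n, vv β n ^ 2 :=
    Summable.tsum_pos (summable_vv_sq hβ) (fun n => sq_nonneg _) 0 (pow_pos (vv_pos hβ 0) 2)
  refine ⟨fun n => ((q n : ℝ) : ℂ), ⟨hsum1, ?_⟩, ?_⟩
  · refine Summable.tsum_pos hsum1 (fun n => mul_nonneg (sq_nonneg _) (hωpos n).le) 0 ?_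
    rw [hterm_eq 0]
    have := vv_pos hβ 0
    have h2 : (0:ℝ) < (β + 2)/1 := by rw [div_one]; linarith
    push_cast
    calc (0:ℝ) < vv β 0 ^2 * ((β + 0 + 2)/(0+1)) := by
          norm_num
          nlinarith [vv_pos hβ 0]
      _ = _ := by norm_num
  · -- value
    have hqv : ∀ n, q n * Real.sqrt (ω (n+1)) = vv β n := fun n =>
      div_mul_cancel₀ _ (Real.sqrt_pos.mpr (hωpos (n+1))).ne'
    have ht : ∀ n, q n * q (n+1) * ω (n+1) = phi β n * vv β n ^ 2 := by
      intro n
      have h1 := cc_w_eq hβ n (q n) (q (n+1))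
      rw [hqv n, hqv (n+1)] at h1
      have h2 := cc_vv_succ hβ n
      calc q n * q (n+1) * ω (n+1) = cc β n * (vv β n * vv β (n+1)) := h1.symm
        _ = phi β n * vv β n ^ 2 := by linear_combination vv β n * h2
    have hnum : thetaNum ω (fun n => ((q n : ℝ) : ℂ))
        = ((∑' n, phi β n * vv β n ^ 2 : ℝ) : ℂ) := by
      rw [thetaNum, Complex.ofReal_tsum]
      refine tsum_congr fun n => ?_
      rw [Complex.conj_ofReal, ← Complex.ofReal_mul, ← Complex.ofReal_mul, ht n]
    have hden : thetaDen ω (fun n => ((q n : ℝ) : ℂ)) = ∑' n, vv β n ^ 2 := by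
      rw [thetaDen]
      exact tsum_congr hden_eq
    have hps : ∀ n, psi β n * vv β (n+1) ^ 2 = phi β n * vv β n ^ 2 := by
      intro n
      have h1 := cc_vv hβ n
      have h2 := cc_vv_succ hβ n
      linear_combination vv β n * h2 - vv β (n+1) * h1
    have hkey : ∑' n, phi β n * vv β n ^ 2 = lam β / 2 * ∑' n, vv β n ^ 2 := by
      have hk := key_sum hβ (h := fun n => vv β n ^ 2) (fun n => sq_nonneg _)
        (summable_vv_sq hβ)
      rw [tsum_congr hps] at hk
      linarith
    rw [theta, hnum, hden, hkey, ← Complex.ofReal_div, Complex.norm_real, Real.norm_eq_abs,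
      mul_div_assoc, div_self hS.ne', mul_one, abs_of_pos (half_pos (lam_pos hβ))]

end theta
end Aux

theorem stmt15 (β : ℝ) (hβ : -1 < β)
    (T : lp (fun _ : ℕ => ℂ) 2 →L[ℂ] lp (fun _ : ℕ => ℂ) 2)
    (hT : JacobiFor (bergW β) T) :
    ‖T‖ = (β + 3) / Real.sqrt (β + 2) ∧
      Uomega (bergW β) = (β + 3) / (2 * Real.sqrt (β + 2)) := by
  constructor
  · refine le_antisymm ?_ ?_
    · rw [← Aux.lam_eq]
      exact T.opNorm_le_bound (Aux.lam_pos hβ).le (Aux.T_norm_le hβ hT)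
    · rw [← Aux.lam_eq]
      exact Aux.T_norm_ge hβ hT
  · have h1 : Uomega (bergW β) = Aux.lam β / 2 := by
      apply IsGreatest.csSup_eq
      constructor
      · obtain ⟨a, ha, hval⟩ := Aux.theta_extremal hβ
        exact ⟨a, ha, hval.symm⟩
      · rintro x ⟨a, ha, rfl⟩
        exact Aux.theta_le hβ ha
    rw [h1, Aux.lam_eq]
    ring
end
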